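/- For every fixed x₁ < x₂ < x₃ < x₄ with cross-ratio χ = ((x₂−x₁)(x₄−x₃))/((x₃−x₁)(x₄−x₂)), the following one-sided limits as κ → 8⁻ exist, are finite, and are strictly positive: lim_{κ→8⁻} Z_a^(κ)(x)/(8−κ) = (π/8)·(x₂−x₁)^{1/4}(x₄−x₃)^{1/4}(1−χ)^{1/4}·₂F₁(1/2, 1/2, 1; 1−χ), and lim_{κ→8⁻} Z_b^(κ)(x)/(8−κ) = (π/8)·(x₄−x₁)^{1/4}(x₃−x₂)^{1/4}·χ^{1/4}·₂F₁(1/2, 1/2, 1; χ). In particular, the pure partition functions Z_a^(κ)(x) and Z_b^(κ)(x) tend to zero at rate (8−κ) as κ → 8⁻. -/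

import Mathlib

/-- Rising factorial (Pochhammer symbol) `(q)ₙ = q(q+1)⋯(q+n−1)`. -/
noncomputable def risingFac (q : ℝ) (n : ℕ) : ℝ := ∏ i ∈ Finset.range n, (q + (i : ℝ))

/-- Gauss hypergeometric function `₂F₁(a,b,c;z)`, defined as the sum of its power series. -/
noncomputable def hyp2F1 (a b c z : ℝ) : ℝ :=
  ∑' n : ℕ, risingFac a n * risingFac b n / (risingFac c n * (Nat.factorial n : ℝ)) * z ^ n

/-- Conformal weight `h(κ) = (6−κ)/(2κ)`. -/
noncomputable def hParam (κ : ℝ) : ℝ := (6 - κ) / (2 * κ)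

/-- Loop fugacity `ν(κ) = −2cos(4π/κ)`. -/
noncomputable def nuParam (κ : ℝ) : ℝ := -2 * Real.cos (4 * Real.pi / κ)

/-- Cross-ratio `χ = ((x₂−x₁)(x₄−x₃))/((x₃−x₁)(x₄−x₂))`. -/
noncomputable def crossRatio (x₁ x₂ x₃ x₄ : ℝ) : ℝ :=
  ((x₂ - x₁) * (x₄ - x₃)) / ((x₃ - x₁) * (x₄ - x₂))

/-- Pure partition function `Z_a^(κ)` of multiple SLE_κ (N = 2). -/
noncomputable def Za (κ x₁ x₂ x₃ x₄ : ℝ) : ℝ :=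
  (x₂ - x₁) ^ (-(2 * hParam κ)) * (x₄ - x₃) ^ (-(2 * hParam κ)) *
    (1 - crossRatio x₁ x₂ x₃ x₄) ^ (2 / κ) *
    (hyp2F1 (4/κ) (1 - 4/κ) (8/κ) (1 - crossRatio x₁ x₂ x₃ x₄) /
      hyp2F1 (4/κ) (1 - 4/κ) (8/κ) 1)

/-- Pure partition function `Z_b^(κ)` of multiple SLE_κ (N = 2). -/
noncomputable def Zb (κ x₁ x₂ x₃ x₄ : ℝ) : ℝ :=
  (x₄ - x₁) ^ (-(2 * hParam κ)) * (x₃ - x₂) ^ (-(2 * hParam κ)) *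
    (crossRatio x₁ x₂ x₃ x₄) ^ (2 / κ) *
    (hyp2F1 (4/κ) (1 - 4/κ) (8/κ) (crossRatio x₁ x₂ x₃ x₄) /
      hyp2F1 (4/κ) (1 - 4/κ) (8/κ) 1)

/-- The fused three-point function `Z₃^(κ)(ξ,x₃,x₄)`. -/
noncomputable def Z3 (κ ξ x₃ x₄ : ℝ) : ℝ :=
  (x₄ - x₃) ^ (2/κ) * (x₃ - ξ) ^ (1 - 8/κ) * (x₄ - ξ) ^ (1 - 8/κ) /
    hyp2F1 (4/κ) (1 - 4/κ) (8/κ) 1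

/-! Both partition functions are a prefactor, continuous in `κ` near `8`, times
`₂F₁(4/κ, 1 - 4/κ, 8/κ; z) / ₂F₁(4/κ, 1 - 4/κ, 8/κ; 1)`. The numerator tends to
`₂F₁(1/2, 1/2, 1; z)` by dominated convergence, its terms being bounded by `zⁿ`. By Gauss's
summation theorem the denominator is `Γ(8/κ) Γ(8/κ - 1) / (Γ(4/κ) Γ(12/κ - 1))`, and since
`(8 - κ) Γ(8/κ - 1) = κ Γ(8/κ)`, it blows up like `8 / (Γ(1/2)² (8 - κ)) = 8 / (π (8 - κ))`. -/

open Filter Set MeasureTheory Topology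

lemma risingFac_succ (q : ℝ) (n : ℕ) : risingFac q (n + 1) = risingFac q n * (q + n) :=
  Finset.prod_range_succ _ _

lemma risingFac_eq_ascPochhammer_eval (q : ℝ) (n : ℕ) :
    risingFac q n = (ascPochhammer ℝ n).eval q := by
  induction n with
  | zero => simp [risingFac]
  | succ n ih => rw [risingFac_succ, ascPochhammer_succ_eval, ih]

lemma risingFac_nonneg {q : ℝ} (hq : 0 ≤ q) (n : ℕ) : 0 ≤ risingFac q n :=
  Finset.prod_nonneg fun _ _ => by positivity

lemma risingFac_pos {q : ℝ} (hq : 0 < q) (n : ℕ) : 0 < risingFac q n :=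
  Finset.prod_pos fun _ _ => by positivity

lemma risingFac_le_risingFac {p q : ℝ} (hp : 0 ≤ p) (hpq : p ≤ q) (n : ℕ) :
    risingFac p n ≤ risingFac q n :=
  Finset.prod_le_prod (fun _ _ => by positivity) fun _ _ => by linarith

lemma risingFac_one (n : ℕ) : risingFac 1 n = n.factorial := by
  rw [risingFac_eq_ascPochhammer_eval, ascPochhammer_eval_one]

lemma continuous_risingFac (n : ℕ) : Continuous fun q => risingFac q n := by
  simp only [risingFac_eq_ascPochhammer_eval]
  exact Polynomial.continuous _

lemma Real.Gamma_add_natCast {x : ℝ} (hx : 0 < x) (n : ℕ) :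
    Real.Gamma (x + n) = risingFac x n * Real.Gamma x := by
  induction n with
  | zero => simp [risingFac]
  | succ n ih =>
    rw [Nat.cast_succ, ← add_assoc, Real.Gamma_add_one (by positivity), ih, risingFac_succ]
    ring

lemma risingFac_div_factorial_eq_choose (a : ℝ) (n : ℕ) :
    risingFac a n / n.factorial = Ring.choose (a + n - 1) n := by
  rw [← Ring.multichoose_eq, div_eq_iff (by positivity), risingFac_eq_ascPochhammer_eval,
    ← Polynomial.ascPochhammer_smeval_eq_eval, ← Ring.factorial_nsmul_multichoose_eq_ascPochhammer,
    nsmul_eq_mul, mul_comm]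

lemma hasSum_risingFac_div_factorial_mul_pow (a : ℝ) {t : ℝ} (ht : |t| < 1) :
    HasSum (fun n => risingFac a n / n.factorial * t ^ n) ((1 - t) ^ (-a)) := by
  have h := (Real.one_div_one_sub_rpow_hasFPowerSeriesOnBall_zero a).hasSum
    (y := t) (by
      rw [Metric.mem_eball, edist_zero_right, ← ofReal_norm, ← ENNReal.ofReal_one,
        ENNReal.ofReal_lt_ofReal_iff one_pos]
      exact ht)
  simp only [FormalMultilinearSeries.ofScalars_apply_eq, zero_add, smul_eq_mul] at h
  rw [Real.rpow_neg (by linarith [le_abs_self t]), ← one_div]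
  simpa only [risingFac_div_factorial_eq_choose] using h

lemma lintegral_rpow_mul_one_sub_rpow {α β : ℝ} (hα : 0 < α) (hβ : 0 < β) :
    ∫⁻ t in Ioo 0 1, ENNReal.ofReal (t ^ (α - 1) * (1 - t) ^ (β - 1)) =
      ENNReal.ofReal (ProbabilityTheory.beta α β) := by
  have hB := ProbabilityTheory.beta_pos hα hβ
  have h := ProbabilityTheory.lintegral_betaPDF_eq_one hα hβ
  rw [ProbabilityTheory.lintegral_betaPDF] at h
  simp_rw [mul_assoc, ENNReal.ofReal_mul (one_div_pos.2 hB).le] at h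
  rw [lintegral_const_mul' _ _ ENNReal.ofReal_ne_top] at h
  rw [ENNReal.eq_inv_of_mul_eq_one_left ((mul_comm _ _).trans h), one_div,
    ← ENNReal.ofReal_inv_of_pos (inv_pos.2 hB), inv_inv]

lemma hasSum_of_tsum_ofReal_eq {ι : Type*} {f : ι → ℝ} {s : ℝ} (hf : ∀ i, 0 ≤ f i) (hs : 0 ≤ s)
    (h : ∑' i, ENNReal.ofReal (f i) = ENNReal.ofReal s) : HasSum f s := by
  have hsum : Summable f := by
    simpa only [ENNReal.toReal_ofReal (hf _)] using
      ENNReal.summable_toReal (h.trans_ne ENNReal.ofReal_ne_top)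
  rw [← ENNReal.ofReal_tsum_of_nonneg hf hsum,
    ENNReal.ofReal_eq_ofReal_iff (tsum_nonneg hf) hs] at h
  exact h ▸ hsum.hasSum

open ProbabilityTheory in
/-- Gauss's summation theorem, proved by expanding `(1 - t)^(-a)` inside Euler's Beta integral. -/
theorem hasSum_hyp2F1_one {a b c : ℝ} (ha : 0 ≤ a) (hb : 0 < b) (hbc : b < c)
    (habc : a + b < c) :
    HasSum (fun n => risingFac a n * risingFac b n / (risingFac c n * n.factorial))
      (Real.Gamma c * Real.Gamma (c - a - b) / (Real.Gamma (c - a) * Real.Gamma (c - b))) := by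
  have hcb : 0 < c - b := by linarith
  have hcab : 0 < c - a - b := by linarith
  set coeff : ℕ → ℝ := fun n => risingFac a n / n.factorial
  have hcoeff : ∀ n, 0 ≤ coeff n := fun n => by have := risingFac_nonneg ha n; positivity
  set F : ℕ → ℝ → ℝ := fun n t => coeff n * (t ^ (b + n - 1) * (1 - t) ^ (c - b - 1))
  have hF : ∀ n, ∀ t ∈ Ioo (0 : ℝ) 1, 0 ≤ F n t := fun n t ht => by
    have := hcoeff n; have := ht.1; have : 0 < 1 - t := by linarith [ht.2]
    positivity
  have hterm : ∀ n, ENNReal.ofReal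
      (risingFac a n * risingFac b n / (risingFac c n * n.factorial) * beta b (c - b)) =
        ∫⁻ t in Ioo 0 1, ENNReal.ofReal (F n t) := by
    intro n
    simp_rw [F, ENNReal.ofReal_mul (hcoeff n)]
    rw [lintegral_const_mul' _ _ ENNReal.ofReal_ne_top,
      lintegral_rpow_mul_one_sub_rpow (by positivity) hcb, ← ENNReal.ofReal_mul (hcoeff n)]
    congr 1
    have := risingFac_pos (hb.trans hbc) n
    have := Real.Gamma_pos_of_pos (hb.trans hbc)
    simp only [coeff, beta, show b + n + (c - b) = c + n by ring, add_sub_cancel,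
      Real.Gamma_add_natCast hb, Real.Gamma_add_natCast (hb.trans hbc)]
    field_simp
  have hpoint : ∀ t ∈ Ioo (0 : ℝ) 1,
      HasSum (fun n => F n t) (t ^ (b - 1) * (1 - t) ^ (c - a - b - 1)) := by
    intro t ⟨ht0, ht1⟩
    have h := (hasSum_risingFac_div_factorial_mul_pow a (t := t)
      (by rw [abs_lt]; constructor <;> linarith)).mul_left (t ^ (b - 1) * (1 - t) ^ (c - b - 1))
    rw [mul_assoc, ← Real.rpow_add (by linarith), show c - b - 1 + -a = c - a - b - 1 by ring] at h
    refine h.congr_fun fun n => ?_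
    simp only [F, coeff, show b + n - 1 = (b - 1) + n by ring, Real.rpow_add ht0,
      Real.rpow_natCast]
    ring
  have hsum : ∑' n, ENNReal.ofReal
      (risingFac a n * risingFac b n / (risingFac c n * n.factorial) * beta b (c - b)) =
        ENNReal.ofReal (beta b (c - a - b)) := by
    simp_rw [hterm]
    rw [← lintegral_tsum fun n => by fun_prop, ← lintegral_rpow_mul_one_sub_rpow hb hcab]
    refine setLIntegral_congr_fun measurableSet_Ioo fun t ht => ?_
    rw [← ENNReal.ofReal_tsum_of_nonneg (hF · t ht) (hpoint t ht).summable, (hpoint t ht).tsum_eq]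
  have hB := beta_pos hb hcb
  have hnonneg : ∀ n, 0 ≤
      risingFac a n * risingFac b n / (risingFac c n * n.factorial) * beta b (c - b) := fun n => by
    have := risingFac_nonneg ha n
    have := risingFac_nonneg hb.le n
    have := risingFac_pos (hb.trans hbc) n
    positivity
  have hval : beta b (c - a - b) / beta b (c - b) =
      Real.Gamma c * Real.Gamma (c - a - b) / (Real.Gamma (c - a) * Real.Gamma (c - b)) := by
    have := Real.Gamma_pos_of_pos hb
    have := Real.Gamma_pos_of_pos (show 0 < c - a by linarith)
    simp only [beta, show b + (c - a - b) = c - a by ring, add_sub_cancel]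
    field_simp
  rw [← hval]
  exact ((hasSum_of_tsum_ofReal_eq hnonneg (beta_pos hb hcab).le hsum).div_const _).congr_fun
    fun n => (mul_div_cancel_right₀ _ hB.ne').symm

lemma hyp2F1_one_eq {a b c : ℝ} (ha : 0 ≤ a) (hb : 0 < b) (hbc : b < c) (habc : a + b < c) :
    hyp2F1 a b c 1 =
      Real.Gamma c * Real.Gamma (c - a - b) / (Real.Gamma (c - a) * Real.Gamma (c - b)) := by
  simpa only [hyp2F1, one_pow, mul_one] using (hasSum_hyp2F1_one ha hb hbc habc).tsum_eq

lemma abs_hyp2F1_term_le {a b c : ℝ} (ha : a ∈ Icc (0 : ℝ) 1) (hb : b ∈ Icc (0 : ℝ) 1) (hc : 1 ≤ c)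
    {z : ℝ} (hz : 0 ≤ z) (n : ℕ) :
    |risingFac a n * risingFac b n / (risingFac c n * n.factorial) * z ^ n| ≤ z ^ n := by
  have hfac : (0 : ℝ) < n.factorial := by positivity
  have hca : risingFac a n ≤ n.factorial := risingFac_one n ▸ risingFac_le_risingFac ha.1 ha.2 n
  have hcb : risingFac b n ≤ n.factorial := risingFac_one n ▸ risingFac_le_risingFac hb.1 hb.2 n
  have hcc : (n.factorial : ℝ) ≤ risingFac c n :=
    risingFac_one n ▸ risingFac_le_risingFac zero_le_one hc n
  have := hfac.trans_le hcc
  have := risingFac_nonneg ha.1 n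
  have := risingFac_nonneg hb.1 n
  have hcoeff : risingFac a n * risingFac b n / (risingFac c n * n.factorial) ≤ 1 := by
    rw [div_le_one (by positivity)]
    nlinarith [mul_le_mul hca hcb (risingFac_nonneg hb.1 n) hfac.le]
  rw [abs_of_nonneg (by positivity)]
  exact mul_le_of_le_one_left (by positivity) hcoeff

lemma summable_hyp2F1_term {a b c : ℝ} (ha : a ∈ Icc (0 : ℝ) 1) (hb : b ∈ Icc (0 : ℝ) 1)
    (hc : 1 ≤ c) {z : ℝ} (hz₀ : 0 ≤ z) (hz₁ : z < 1) :
    Summable fun n => risingFac a n * risingFac b n / (risingFac c n * n.factorial) * z ^ n :=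
  (summable_geometric_of_lt_one hz₀ hz₁).of_norm_bounded (abs_hyp2F1_term_le ha hb hc hz₀)

lemma hyp2F1_pos {a b c : ℝ} (ha : a ∈ Icc (0 : ℝ) 1) (hb : b ∈ Icc (0 : ℝ) 1) (hc : 1 ≤ c)
    {z : ℝ} (hz₀ : 0 ≤ z) (hz₁ : z < 1) : 0 < hyp2F1 a b c z := by
  refine (summable_hyp2F1_term ha hb hc hz₀ hz₁).tsum_pos (fun n => ?_) 0 (by simp [risingFac])
  have := risingFac_nonneg ha.1 n
  have := risingFac_nonneg hb.1 n
  have := risingFac_pos (zero_lt_one.trans_le hc) n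
  positivity

lemma tendsto_hyp2F1 {ι : Type*} {l : Filter ι} {a b c : ι → ℝ} {a₀ b₀ c₀ z : ℝ}
    (ha : Tendsto a l (𝓝 a₀)) (hb : Tendsto b l (𝓝 b₀)) (hc : Tendsto c l (𝓝 c₀)) (hc₀ : 0 < c₀)
    (hbound : ∀ᶠ i in l, a i ∈ Icc (0 : ℝ) 1 ∧ b i ∈ Icc (0 : ℝ) 1 ∧ 1 ≤ c i)
    (hz₀ : 0 ≤ z) (hz₁ : z < 1) :
    Tendsto (fun i => hyp2F1 (a i) (b i) (c i) z) l (𝓝 (hyp2F1 a₀ b₀ c₀ z)) := by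
  refine tendsto_tsum_of_dominated_convergence (summable_geometric_of_lt_one hz₀ hz₁)
    (fun n => ?_) ?_
  · have hc₀n : risingFac c₀ n * n.factorial ≠ 0 := by
      have := risingFac_pos hc₀ n
      positivity
    have hr := (continuous_risingFac n).tendsto
    exact ((((hr _).comp ha).mul ((hr _).comp hb)).div
      (((hr _).comp hc).mul tendsto_const_nhds) hc₀n).mul tendsto_const_nhds
  · filter_upwards [hbound] with i ⟨ha, hb, hc⟩ n
    exact abs_hyp2F1_term_le ha hb hc hz₀ n

lemma sub_mul_hyp2F1_one_eq {κ : ℝ} (hκ : κ ∈ Ioo (4 : ℝ) 8) :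
    (8 - κ) * hyp2F1 (4 / κ) (1 - 4 / κ) (8 / κ) 1 =
      κ * Real.Gamma (8 / κ) ^ 2 / (Real.Gamma (4 / κ) * Real.Gamma (12 / κ - 1)) := by
  obtain ⟨h4, h8⟩ := hκ
  have hκ0 : 0 < κ := by linarith
  have h4κ₀ : 0 < 4 / κ := by positivity
  have h4κ : 4 / κ < 1 := (div_lt_one hκ0).2 h4
  have h8κ : 1 < 8 / κ := (one_lt_div hκ0).2 h8
  have hΓ : Real.Gamma (8 / κ) = (8 / κ - 1) * Real.Gamma (8 / κ - 1) := by
    simpa using Real.Gamma_add_one (sub_pos.2 h8κ).ne'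
  rw [hyp2F1_one_eq h4κ₀.le (by linarith) (by linarith) (by linarith),
    show 8 / κ - 4 / κ - (1 - 4 / κ) = 8 / κ - 1 by ring, show 8 / κ - 4 / κ = 4 / κ by ring,
    show 8 / κ - (1 - 4 / κ) = 12 / κ - 1 by ring, hΓ]
  field_simp

lemma tendsto_sub_mul_hyp2F1_one :
    Tendsto (fun κ => (8 - κ) * hyp2F1 (4 / κ) (1 - 4 / κ) (8 / κ) 1) (𝓝[<] 8)
      (𝓝 (8 / Real.pi)) := by
  have hΓ : ∀ s : ℝ, 0 < s → ContinuousAt Real.Gamma s := fun s hs =>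
    (Real.differentiableAt_Gamma fun m => by linarith [(m.cast_nonneg : (0 : ℝ) ≤ m)]).continuousAt
  have hcont : ContinuousAt (fun κ : ℝ =>
      κ * Real.Gamma (8 / κ) ^ 2 / (Real.Gamma (4 / κ) * Real.Gamma (12 / κ - 1))) 8 := by
    have h8 : ContinuousAt (fun κ : ℝ => Real.Gamma (8 / κ)) 8 :=
      (hΓ 1 one_pos).comp_of_eq (f := (8 / ·)) (by fun_prop (disch := norm_num)) (by norm_num)
    have h4 : ContinuousAt (fun κ : ℝ => Real.Gamma (4 / κ)) 8 :=
      (hΓ (1 / 2) one_half_pos).comp_of_eq (f := (4 / ·)) (by fun_prop (disch := norm_num))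
        (by norm_num)
    have h12 : ContinuousAt (fun κ : ℝ => Real.Gamma (12 / κ - 1)) 8 :=
      (hΓ (1 / 2) one_half_pos).comp_of_eq (f := (12 / · - 1)) (by fun_prop (disch := norm_num))
        (by norm_num)
    exact (continuousAt_id.mul (h8.pow 2)).div (h4.mul h12)
      (mul_pos (Real.Gamma_pos_of_pos (by norm_num)) (Real.Gamma_pos_of_pos (by norm_num))).ne'
  have hval : (8 : ℝ) * Real.Gamma (8 / 8) ^ 2 / (Real.Gamma (4 / 8) * Real.Gamma (12 / 8 - 1)) =
      8 / Real.pi := by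
    norm_num [Real.Gamma_one_half_eq, Real.mul_self_sqrt Real.pi_pos.le]
  rw [← hval]
  refine (hcont.tendsto.mono_left nhdsWithin_le_nhds).congr' ?_
  filter_upwards [Ioo_mem_nhdsLT (by norm_num : (4 : ℝ) < 8)] with κ hκ
  exact (sub_mul_hyp2F1_one_eq hκ).symm

lemma tendsto_hyp2F1_nhdsLT_eight {z : ℝ} (hz₀ : 0 ≤ z) (hz₁ : z < 1) :
    Tendsto (fun κ => hyp2F1 (4 / κ) (1 - 4 / κ) (8 / κ) z) (𝓝[<] 8)
      (𝓝 (hyp2F1 (1 / 2) (1 / 2) 1 z)) := by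
  have hdiv : ∀ p : ℝ, Tendsto (fun κ : ℝ => p / κ) (𝓝[<] 8) (𝓝 (p / 8)) := fun p =>
    (tendsto_const_nhds.div tendsto_id (by norm_num)).mono_left nhdsWithin_le_nhds
  refine tendsto_hyp2F1 (by convert hdiv 4 using 2; norm_num)
    (by convert (hdiv 4).const_sub 1 using 2; norm_num) (by convert hdiv 8 using 2; norm_num)
    one_pos ?_ hz₀ hz₁
  filter_upwards [Ioo_mem_nhdsLT (by norm_num : (4 : ℝ) < 8)] with κ ⟨h4, h8⟩
  have hκ0 : 0 < κ := by linarith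
  have h4κ : 4 / κ ≤ 1 := (div_le_one hκ0).2 h4.le
  have h4κ₀ : 0 < 4 / κ := by positivity
  exact ⟨⟨h4κ₀.le, h4κ⟩, ⟨by linarith, by linarith⟩, (one_le_div hκ0).2 h8.le⟩

lemma tendsto_rpow_neg_two_mul_hParam {y : ℝ} (hy : 0 < y) :
    Tendsto (fun κ => y ^ (-(2 * hParam κ))) (𝓝[<] 8) (𝓝 (y ^ ((1 : ℝ) / 4))) := by
  have h : ContinuousAt (fun κ => y ^ (-(2 * hParam κ))) 8 := by
    unfold hParam
    exact (Real.continuousAt_const_rpow hy.ne').comp (by fun_prop (disch := norm_num))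
  convert h.tendsto.mono_left nhdsWithin_le_nhds using 2
  norm_num [hParam]

/-- The common shape of `Za` and `Zb` divided by `8 - κ`. -/
lemma tendsto_partitionFunction_div_sub {y₁ y₂ z : ℝ} (hy₁ : 0 < y₁) (hy₂ : 0 < y₂) (hz₀ : 0 < z)
    (hz₁ : z < 1) :
    Tendsto (fun κ => y₁ ^ (-(2 * hParam κ)) * y₂ ^ (-(2 * hParam κ)) * z ^ (2 / κ) *
        (hyp2F1 (4 / κ) (1 - 4 / κ) (8 / κ) z / hyp2F1 (4 / κ) (1 - 4 / κ) (8 / κ) 1) / (8 - κ))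
      (𝓝[<] 8)
      (𝓝 (Real.pi / 8 * y₁ ^ ((1 : ℝ) / 4) * y₂ ^ ((1 : ℝ) / 4) * z ^ ((1 : ℝ) / 4) *
        hyp2F1 (1 / 2) (1 / 2) 1 z)) := by
  have hz : Tendsto (fun κ : ℝ => z ^ (2 / κ)) (𝓝[<] 8) (𝓝 (z ^ ((1 : ℝ) / 4))) := by
    have h : ContinuousAt (fun κ : ℝ => z ^ (2 / κ)) 8 :=
      (Real.continuousAt_const_rpow hz₀.ne').comp (by fun_prop (disch := norm_num))
    convert h.tendsto.mono_left nhdsWithin_le_nhds using 2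
    norm_num
  have h := ((((tendsto_rpow_neg_two_mul_hParam hy₁).mul
    (tendsto_rpow_neg_two_mul_hParam hy₂)).mul hz).mul
    (tendsto_hyp2F1_nhdsLT_eight hz₀.le hz₁)).div tendsto_sub_mul_hyp2F1_one (by positivity)
  convert h using 1
  · ext κ
    rw [Pi.div_apply, ← mul_div_assoc, div_div, mul_comm (hyp2F1 _ _ _ 1)]
  · field_simp

lemma crossRatio_mem_Ioo {x₁ x₂ x₃ x₄ : ℝ} (h12 : x₁ < x₂) (h23 : x₂ < x₃) (h34 : x₃ < x₄) :
    crossRatio x₁ x₂ x₃ x₄ ∈ Ioo 0 1 := by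
  have hden : 0 < (x₃ - x₁) * (x₄ - x₂) := by nlinarith
  exact ⟨div_pos (by nlinarith) hden, (div_lt_one hden).2 (by nlinarith)⟩

/-- as `κ → 8⁻`, the pure partition functions `Z_a^(κ)` and `Z_b^(κ)`
decay at rate `8−κ`, with explicit, finite, strictly positive limits of
`Z^(κ)/(8−κ)`. -/
theorem statement2 (x₁ x₂ x₃ x₄ : ℝ) (h12 : x₁ < x₂) (h23 : x₂ < x₃) (h34 : x₃ < x₄) :
    (Filter.Tendsto (fun κ : ℝ => Za κ x₁ x₂ x₃ x₄ / (8 - κ))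
        (nhdsWithin 8 (Set.Iio 8))
        (nhds (Real.pi / 8 * (x₂ - x₁) ^ ((1:ℝ)/4) * (x₄ - x₃) ^ ((1:ℝ)/4) *
          (1 - crossRatio x₁ x₂ x₃ x₄) ^ ((1:ℝ)/4) *
          hyp2F1 (1/2) (1/2) 1 (1 - crossRatio x₁ x₂ x₃ x₄))) ∧
      0 < Real.pi / 8 * (x₂ - x₁) ^ ((1:ℝ)/4) * (x₄ - x₃) ^ ((1:ℝ)/4) *
          (1 - crossRatio x₁ x₂ x₃ x₄) ^ ((1:ℝ)/4) *
          hyp2F1 (1/2) (1/2) 1 (1 - crossRatio x₁ x₂ x₃ x₄)) ∧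
    (Filter.Tendsto (fun κ : ℝ => Zb κ x₁ x₂ x₃ x₄ / (8 - κ))
        (nhdsWithin 8 (Set.Iio 8))
        (nhds (Real.pi / 8 * (x₄ - x₁) ^ ((1:ℝ)/4) * (x₃ - x₂) ^ ((1:ℝ)/4) *
          (crossRatio x₁ x₂ x₃ x₄) ^ ((1:ℝ)/4) *
          hyp2F1 (1/2) (1/2) 1 (crossRatio x₁ x₂ x₃ x₄))) ∧
      0 < Real.pi / 8 * (x₄ - x₁) ^ ((1:ℝ)/4) * (x₃ - x₂) ^ ((1:ℝ)/4) *
          (crossRatio x₁ x₂ x₃ x₄) ^ ((1:ℝ)/4) *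
          hyp2F1 (1/2) (1/2) 1 (crossRatio x₁ x₂ x₃ x₄)) := by
  obtain ⟨hχ₀, hχ₁⟩ := crossRatio_mem_Ioo h12 h23 h34
  have hhalf : (1 / 2 : ℝ) ∈ Icc 0 1 := by norm_num
  have h21 := sub_pos.2 h12
  have h43 := sub_pos.2 h34
  have h41 := sub_pos.2 (h12.trans (h23.trans h34))
  have h32 := sub_pos.2 h23
  have := hyp2F1_pos hhalf hhalf le_rfl (sub_nonneg.2 hχ₁.le) (sub_lt_self 1 hχ₀)
  have := hyp2F1_pos hhalf hhalf le_rfl hχ₀.le hχ₁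
  refine ⟨⟨tendsto_partitionFunction_div_sub h21 h43 (sub_pos.2 hχ₁) (sub_lt_self 1 hχ₀),
    by positivity⟩, tendsto_partitionFunction_div_sub h41 h32 hχ₀ hχ₁, by positivity⟩
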